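/- Let λ ∈ X, let w ∈ W_p, and let t ∈ W_p be any reflection. Then wt·λ < w·λ (in the order ≤) if and only if wt·λ ≺ w·λ (in the order ⪯). -/

import Mathlib

noncomputable section

/-- The real vector space `X ⊗ ℝ`, where `X` is a free abelian group of rank `r`. -/
abbrev Vr (r : ℕ) := Fin r → ℝ

/-- The lattice `X` (identified with `ℤ^r`); its dual lattice `Y` is identified with
the same coordinate lattice via the standard perfect pairing. -/
abbrev Lr (r : ℕ) := Fin r → ℤ

/-- The embedding `X → X ⊗ ℝ`. -/
def toV {r : ℕ} (x : Lr r) : Vr r := fun i => (x i : ℝ)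

/-- The perfect pairing `⟨·,·⟩ : X × Y → ℤ`. -/
def pairZ {r : ℕ} (x y : Lr r) : ℤ := ∑ i, x i * y i

/-- The real extension of the pairing to `(X ⊗ ℝ) × Y → ℝ`. -/
def pairR {r : ℕ} (v : Vr r) (y : Lr r) : ℝ := ∑ i, v i * (y i : ℝ)

/-- The subgroup `ℤI` of `X` generated by a subset `I ⊆ X`. -/
def ZI {r : ℕ} (I : Finset (Lr r)) : AddSubgroup (Lr r) :=
  AddSubgroup.closure (I : Set (Lr r))

/-- The data of a reduced crystallographic root system `Φ ⊆ X` with a fixed positive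
system `Φ⁺`, simple roots `Φ_s`, coroots `α∨ ∈ Y`, a prime `p`, and the half-sum
`ρ ∈ X` of the positive roots. -/
structure ARDatum (r : ℕ) where
  Φ : Finset (Lr r)
  pos : Finset (Lr r)
  simples : Finset (Lr r)
  coroot : Lr r → Lr r
  p : ℕ
  ρ : Lr r
  hp : p.Prime
  root_ne_zero : ∀ α ∈ Φ, α ≠ 0
  pos_sub : pos ⊆ Φ
  simples_sub : simples ⊆ pos
  pos_or_neg : ∀ α ∈ Φ, α ∈ pos ∨ -α ∈ pos
  not_pos_and_neg : ∀ α ∈ pos, -α ∉ pos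
  neg_mem : ∀ α ∈ Φ, -α ∈ Φ
  root_coroot_two : ∀ α ∈ Φ, pairZ α (coroot α) = 2
  reflect_root_mem : ∀ α ∈ Φ, ∀ β ∈ Φ, β - pairZ β (coroot α) • α ∈ Φ
  reflect_coroot_mem : ∀ α ∈ Φ, ∀ β ∈ Φ,
    coroot β - pairZ α (coroot β) • coroot α ∈ coroot '' (Φ : Set (Lr r))
  reduced : ∀ α ∈ Φ, ∀ c : ℤ, c • α ∈ Φ → c = 1 ∨ c = -1
  pos_sum_simples : ∀ β ∈ pos, ∃ c : Lr r → ℕ, β = ∑ α ∈ simples, (c α : ℤ) • α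
  two_rho : (2 : ℤ) • ρ = ∑ α ∈ pos, α

namespace ARDatum

/-- The group of affine transformations of `X ⊗ ℝ`. -/
abbrev G (r : ℕ) := (Vr r) ≃ᵃ[ℝ] (Vr r)

variable {r : ℕ} (D : ARDatum r)

/-- `g` is the affine reflection `s_{α,mp} : v ↦ v − (⟨v,α∨⟩ − mp)·α`. -/
def IsRefl (α : Lr r) (m : ℤ) (g : G r) : Prop :=
  ∀ v : Vr r, g v = v - (pairR v (D.coroot α) - (m : ℝ) * (D.p : ℝ)) • toV α

/-- `g` is the linear reflection `s_α : v ↦ v − ⟨v,α∨⟩·α`. -/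
def IsLinRefl (α : Lr r) (g : G r) : Prop := D.IsRefl α 0 g

/-- `g` is the translation `t_{α,mp} : v ↦ v + mp·α`. -/
def IsTransl (α : Lr r) (m : ℤ) (g : G r) : Prop :=
  ∀ v : Vr r, g v = v + ((m : ℝ) * (D.p : ℝ)) • toV α

/-- The affine Weyl group `W_p`, generated by the `s_α` and the `t_{α,mp}`
for `α ∈ Φ⁺`, `m ∈ ℤ`. -/
def Wp : Subgroup (G r) :=
  Subgroup.closure ({g | ∃ α ∈ D.pos, D.IsLinRefl α g} ∪
    {g | ∃ α ∈ D.pos, ∃ m : ℤ, D.IsTransl α m g})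

/-- The finite Weyl group `W`, generated by the `s_α` for `α ∈ Φ⁺`. -/
def W : Subgroup (G r) :=
  Subgroup.closure {g | ∃ α ∈ D.pos, D.IsLinRefl α g}

/-- The subgroup `W_{I,p}` generated by the `s_α` and `t_{α,mp}` for `α ∈ I`. -/
def WIp (I : Finset (Lr r)) : Subgroup (G r) :=
  Subgroup.closure ({g | ∃ α ∈ I, D.IsLinRefl α g} ∪
    {g | ∃ α ∈ I, ∃ m : ℤ, D.IsTransl α m g})

/-- The subgroup `W_I` of `W` generated by the `s_α` for `α ∈ I`. -/
def WI (I : Finset (Lr r)) : Subgroup (G r) :=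
  Subgroup.closure {g | ∃ α ∈ I, D.IsLinRefl α g}

/-- `g` is a reflection (the reflections of `W_p` are exactly the `s_{α,mp}`). -/
def IsReflection (g : G r) : Prop := ∃ α ∈ D.pos, ∃ m : ℤ, D.IsRefl α m g

/-- The dot action `w·v := w(v+ρ) − ρ`. -/
def dot (g : G r) (v : Vr r) : Vr r := g (v + toV D.ρ) - toV D.ρ

/-- The hyperplane `H_{α,n} = {v : ⟨v+ρ,α∨⟩ = np}`. -/
def Hyp (α : Lr r) (n : ℤ) : Set (Vr r) :=
  {v | pairR (v + toV D.ρ) (D.coroot α) = (n : ℝ) * (D.p : ℝ)}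

/-- The complement of the union of all the hyperplanes `H_{α,n}`. -/
def Reg : Set (Vr r) :=
  {v | ∀ α ∈ D.pos, ∀ n : ℤ, pairR (v + toV D.ρ) (D.coroot α) ≠ (n : ℝ) * (D.p : ℝ)}

/-- The alcove containing `v` (the connected component of `v` in the complement of
the hyperplanes). -/
def alcoveOf (v : Vr r) : Set (Vr r) := connectedComponentIn D.Reg v

/-- `H_{α,n}` contains a wall of `A`, i.e. the interior of `closure A ∩ H_{α,n}`
inside the hyperplane `H_{α,n}` is nonempty. -/
def HasWall (A : Set (Vr r)) (α : Lr r) (n : ℤ) : Prop :=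
  ∃ x ∈ closure A ∩ D.Hyp α n, ∃ ε > 0,
    ∀ y ∈ D.Hyp α n, dist y x < ε → y ∈ closure A

/-- The fundamental alcove `C`. -/
def FundC : Set (Vr r) :=
  {v | ∀ α ∈ D.pos, 0 < pairR (v + toV D.ρ) (D.coroot α) ∧
    pairR (v + toV D.ρ) (D.coroot α) < (D.p : ℝ)}

/-- The closure `C̄` of the fundamental alcove. -/
def FundCBar : Set (Vr r) :=
  {v | ∀ α ∈ D.pos, 0 ≤ pairR (v + toV D.ρ) (D.coroot α) ∧
    pairR (v + toV D.ρ) (D.coroot α) ≤ (D.p : ℝ)}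

/-- The region `C_I`. -/
def CI (I : Finset (Lr r)) : Set (Vr r) :=
  {v | ∀ α ∈ D.pos, α ∈ ZI I → 0 < pairR (v + toV D.ρ) (D.coroot α) ∧
    pairR (v + toV D.ρ) (D.coroot α) < (D.p : ℝ)}

/-- The region `C̄_I`. -/
def CIBar (I : Finset (Lr r)) : Set (Vr r) :=
  {v | ∀ α ∈ D.pos, α ∈ ZI I → 0 ≤ pairR (v + toV D.ρ) (D.coroot α) ∧
    pairR (v + toV D.ρ) (D.coroot α) ≤ (D.p : ℝ)}

/-- `S_p`: the reflections of `W_p` in the walls of the fundamental alcove `C`. -/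
def Sp : Set (G r) :=
  {g | g ∈ D.Wp ∧ ∃ α ∈ D.pos, ∃ m : ℤ, D.IsRefl α m g ∧ D.HasWall D.FundC α m}

/-- One step of the order `⪯` (`↑`): `s_{α,mp}·u ⪯ u` whenever `⟨u+ρ,α∨⟩ ≥ mp`. -/
def UpStep (v u : Vr r) : Prop :=
  ∃ α ∈ D.pos, ∃ m : ℤ, (m : ℝ) * (D.p : ℝ) ≤ pairR (u + toV D.ρ) (D.coroot α) ∧
    v = u - (pairR (u + toV D.ρ) (D.coroot α) - (m : ℝ) * (D.p : ℝ)) • toV α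

/-- The order `⪯` (`↑`): the reflexive-transitive closure of `UpStep`. -/
def Up : Vr r → Vr r → Prop := Relation.ReflTransGen D.UpStep

/-- The strict order `≺`. -/
def Ups (v u : Vr r) : Prop := D.Up v u ∧ v ≠ u

/-- The order `≤`: `v ≤ u` iff `u − v` is a `ℤ≥0`-combination of the simple roots. -/
def Le (v u : Vr r) : Prop :=
  ∃ c : Lr r → ℕ, u - v = ∑ α ∈ D.simples, (c α : ℝ) • toV α

/-- The strict order `<`. -/
def Lt (v u : Vr r) : Prop := D.Le v u ∧ v ≠ u

/-- `X₊ = {ν ∈ X : ⟨ν+ρ,α∨⟩ ≥ 0 for all α ∈ Φ⁺}`, viewed inside `X ⊗ ℝ`. -/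
def XplusR : Set (Vr r) :=
  {v | (∃ ν : Lr r, toV ν = v) ∧ ∀ α ∈ D.pos, 0 ≤ pairR (v + toV D.ρ) (D.coroot α)}

/-- `n_α(v)`: the unique integer with `n_α(v)·p < ⟨v+ρ,α∨⟩ < (n_α(v)+1)·p`
(for `v` on none of the hyperplanes), realised as a floor. -/
def nfl (v : Vr r) (α : Lr r) : ℤ := ⌊pairR (v + toV D.ρ) (D.coroot α) / (D.p : ℝ)⌋

/-- `d(v) = ∑_{α ∈ Φ⁺} n_α(v)`. -/
def dfn (v : Vr r) : ℤ := ∑ α ∈ D.pos, D.nfl v α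

/-- The sublattice `pX` of `X`. -/
def pLat : AddSubgroup (Lr r) where
  carrier := {x | ∃ y : Lr r, x = (D.p : ℤ) • y}
  zero_mem' := ⟨0, by simp⟩
  add_mem' := by rintro a b ⟨y, rfl⟩ ⟨z, rfl⟩; exact ⟨y + z, (smul_add _ _ _).symm⟩
  neg_mem' := by rintro a ⟨y, rfl⟩; exact ⟨-y, (smul_neg _ _).symm⟩

/-- The orbit of `ν + pX` under the dot action of `W_I` on `X/pX`. -/
def dotOrbit (I : Finset (Lr r)) (ν : Lr r) : Set (Lr r ⧸ D.pLat) :=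
  {c | ∃ w ∈ D.WI I, ∃ ν' : Lr r, toV ν' = D.dot w (toV ν) ∧
    c = QuotientAddGroup.mk ν'}

end ARDatum


/-!
Write `t = s_{α,mp}`. Every element of `W_p` maps `X` into `X`, its linear part sends each root
`γ` to a root `δ`, and it preserves pairings with coroots modulo `p` (`⟨g x, δ∨⟩ ≡ ⟨x, γ∨⟩`);
the reflection generators need `(s_α γ)∨ = s_α(γ∨)`, i.e. uniqueness of the root with a given
reflection. Hence `w·λ = U ∈ X` and `wt·λ = U - Kβ` with `β` positive and
`K ≡ ⟨U+ρ, β∨⟩ (mod p)`.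

Every step of `⪯` from a point of `X` subtracts a nonnegative integer multiple of a positive
root, so `⪯` implies `≤`. Conversely, if `K ≥ 0` the congruence makes `U - Kβ ⪯ U` a single
step. If `K < 0` but `Kβ ≥ 0`, one step subtracts `(1 - p)Kβ ≥ 0`, and the remaining `pKβ` is a
sum of `p`-divisible multiples of simple roots, each of which is removed in two steps.
-/

section Lattice

variable {r : ℕ}

@[simp] lemma toV_add (x y : Lr r) : toV (x + y) = toV x + toV y := by
  funext i; simp [toV]

@[simp] lemma toV_sub (x y : Lr r) : toV (x - y) = toV x - toV y := by
  funext i; simp [toV]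

@[simp] lemma toV_zsmul (c : ℤ) (x : Lr r) : toV (c • x) = (c : ℝ) • toV x := by
  funext i; simp [toV]

lemma toV_sum {ι : Type*} (S : Finset ι) (f : ι → Lr r) :
    toV (∑ s ∈ S, f s) = ∑ s ∈ S, toV (f s) := by
  funext i; simp [toV]

lemma toV_injective : Function.Injective (toV : Lr r → Vr r) := fun x y h => by
  funext i
  have hi := congrFun h i
  simp only [toV] at hi
  exact_mod_cast hi

lemma pairR_toV (x y : Lr r) : pairR (toV x) y = pairZ x y := by
  simp [pairR, pairZ, toV]

lemma pairR_add_left (v w : Vr r) (y : Lr r) : pairR (v + w) y = pairR v y + pairR w y :=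
  add_dotProduct v w (toV y)

lemma pairR_smul_left (c : ℝ) (v : Vr r) (y : Lr r) : pairR (c • v) y = c * pairR v y :=
  smul_dotProduct c v (toV y)

lemma pairR_sub_left (v w : Vr r) (y : Lr r) : pairR (v - w) y = pairR v y - pairR w y :=
  sub_dotProduct v w (toV y)

@[simp] lemma pairZ_add_left (x y z : Lr r) : pairZ (x + y) z = pairZ x z + pairZ y z :=
  add_dotProduct x y z

@[simp] lemma pairZ_sub_left (x y z : Lr r) : pairZ (x - y) z = pairZ x z - pairZ y z :=
  sub_dotProduct x y z

@[simp] lemma pairZ_zsmul_left (c : ℤ) (x z : Lr r) : pairZ (c • x) z = c * pairZ x z :=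
  smul_dotProduct c x z

@[simp] lemma pairZ_sub_right (x y z : Lr r) : pairZ x (y - z) = pairZ x y - pairZ x z :=
  dotProduct_sub x y z

@[simp] lemma pairZ_neg_right (x z : Lr r) : pairZ x (-z) = -pairZ x z :=
  dotProduct_neg x z

@[simp] lemma pairZ_zsmul_right (c : ℤ) (x z : Lr r) : pairZ x (c • z) = c * pairZ x z :=
  dotProduct_smul c x z

end Lattice

namespace ARDatum

variable {r : ℕ} (D : ARDatum r)

def reflect (α x : Lr r) : Lr r := x - pairZ x (D.coroot α) • α

lemma reflect_mem {α x : Lr r} (hα : α ∈ D.Φ) (hx : x ∈ D.Φ) : D.reflect α x ∈ D.Φ :=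
  D.reflect_root_mem α hα x hx

lemma coroot_reflect {α γ : Lr r} (hα : α ∈ D.Φ) (hγ : γ ∈ D.Φ) :
    D.coroot (D.reflect α γ) = D.coroot γ - pairZ α (D.coroot γ) • D.coroot α := by
  obtain ⟨δ, hδ, hδz⟩ := D.reflect_coroot_mem α hα γ hγ
  set z := D.coroot γ - pairZ α (D.coroot γ) • D.coroot α
  set μ := D.reflect α γ
  let f : Module.Dual ℤ (Lr r) := (dotProductBilin ℤ ℤ : Lr r →ₗ[ℤ] Lr r →ₗ[ℤ] ℤ).flip z
  have hf (x : Lr r) : f x = pairZ x z := rfl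
  have hαα := D.root_coroot_two α hα
  have hγγ := D.root_coroot_two γ hγ
  have hδf : f δ = 2 := by rw [hf, ← hδz, D.root_coroot_two δ hδ]
  have hμf : f μ = 2 := by
    simp only [hf, μ, z, reflect, pairZ_sub_left, pairZ_zsmul_left, pairZ_sub_right,
      pairZ_zsmul_right, hαα, hγγ]
    ring
  have hδΦ : Set.MapsTo (Module.preReflection δ f) D.Φ D.Φ := fun x hx => by
    rw [Module.preReflection_apply, hf, ← hδz]
    exact D.reflect_root_mem δ hδ x hx
  have hμΦ : Set.MapsTo (Module.preReflection μ f) D.Φ D.Φ := fun x hx => by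
    have hconj : D.reflect α (D.reflect γ (D.reflect α x)) = x - f x • μ := by
      simp only [hf, μ, z, reflect, pairZ_sub_left, pairZ_zsmul_left, pairZ_sub_right,
        pairZ_zsmul_right, hαα]
      module
    rw [Module.preReflection_apply, ← hconj]
    exact D.reflect_mem hα (D.reflect_mem hγ (D.reflect_mem hα hx))
  have hδμ : δ = μ := Module.eq_of_mapsTo_reflection_of_mem D.Φ.finite_toSet hδf hμf hδf hμf
    hδΦ hμΦ (D.reflect_mem hα hγ)
  rw [← hδμ, hδz]

lemma coroot_neg {γ : Lr r} (hγ : γ ∈ D.Φ) : D.coroot (-γ) = -D.coroot γ := by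
  have h := D.coroot_reflect hγ hγ
  rw [reflect, D.root_coroot_two γ hγ] at h
  rw [show γ - (2 : ℤ) • γ = -γ by module] at h
  rw [h]
  module

lemma pairZ_reflect_coroot_reflect {α γ : Lr r} (hα : α ∈ D.Φ) (hγ : γ ∈ D.Φ) (x : Lr r) :
    pairZ (D.reflect α x) (D.coroot (D.reflect α γ)) = pairZ x (D.coroot γ) := by
  rw [D.coroot_reflect hα hγ]
  simp only [reflect, pairZ_sub_left, pairZ_zsmul_left, pairZ_sub_right, pairZ_zsmul_right,
    D.root_coroot_two α hα]
  ring

def IsCompatible (g : G r) : Prop :=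
  (∀ x : Lr r, ∃ x' : Lr r, g (toV x) = toV x') ∧
  ∀ γ ∈ D.Φ, ∃ δ ∈ D.Φ, (∀ (z : Vr r) (c : ℝ), g (z + c • toV γ) = g z + c • toV δ) ∧
    ∀ x x' : Lr r, g (toV x) = toV x' → pairZ x' (D.coroot δ) ≡ pairZ x (D.coroot γ) [ZMOD D.p]

lemma isCompatible_one : D.IsCompatible 1 :=
  ⟨fun x => ⟨x, rfl⟩, fun γ hγ => ⟨γ, hγ, fun _ _ => rfl, fun _ _ h => by
    rw [toV_injective h]⟩⟩

lemma IsCompatible.mul {g h : G r} (hg : D.IsCompatible g) (hh : D.IsCompatible h) :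
    D.IsCompatible (g * h) := by
  refine ⟨fun x => ?_, fun γ hγ => ?_⟩
  · obtain ⟨x₁, hx₁⟩ := hh.1 x
    obtain ⟨x₂, hx₂⟩ := hg.1 x₁
    exact ⟨x₂, by rw [AffineEquiv.mul_def, AffineEquiv.trans_apply, hx₁, hx₂]⟩
  · obtain ⟨δ₁, hδ₁, hlin₁, hcong₁⟩ := hh.2 γ hγ
    obtain ⟨δ₂, hδ₂, hlin₂, hcong₂⟩ := hg.2 δ₁ hδ₁
    refine ⟨δ₂, hδ₂, fun z c => ?_, fun x x' hx => ?_⟩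
    · simp only [AffineEquiv.mul_def, AffineEquiv.trans_apply, hlin₁, hlin₂]
    · obtain ⟨x₁, hx₁⟩ := hh.1 x
      rw [AffineEquiv.mul_def, AffineEquiv.trans_apply, hx₁] at hx
      exact (hcong₂ x₁ x' hx).trans (hcong₁ x x₁ hx₁)

lemma IsLinRefl.apply_toV {α : Lr r} {g : G r} (hg : D.IsLinRefl α g) (x : Lr r) :
    g (toV x) = toV (D.reflect α x) := by
  rw [hg, reflect, toV_sub, toV_zsmul, pairR_toV]
  simp

lemma IsLinRefl.isCompatible {α : Lr r} (hα : α ∈ D.Φ) {g : G r} (hg : D.IsLinRefl α g) :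
    D.IsCompatible g := by
  refine ⟨fun x => ⟨_, hg.apply_toV D x⟩, fun γ hγ => ⟨D.reflect α γ, D.reflect_mem hα hγ,
    fun z c => ?_, fun x x' hx => ?_⟩⟩
  · rw [hg, hg, reflect, toV_sub, toV_zsmul, pairR_add_left, pairR_smul_left, pairR_toV]
    simp only [Int.cast_zero, zero_mul, sub_zero]
    module
  · rw [hg.apply_toV D, toV_injective.eq_iff] at hx
    rw [← hx, D.pairZ_reflect_coroot_reflect hα hγ]

lemma IsLinRefl.inv_eq {α : Lr r} (hα : α ∈ D.Φ) {g : G r} (hg : D.IsLinRefl α g) :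
    g⁻¹ = g := by
  refine inv_eq_of_mul_eq_one_left (AffineEquiv.ext fun v => ?_)
  have hαα : pairR (toV α) (D.coroot α) = 2 := by
    rw [pairR_toV, D.root_coroot_two α hα]; norm_num
  show g (g v) = v
  rw [hg, hg, pairR_sub_left, pairR_smul_left, hαα]
  simp only [Int.cast_zero, zero_mul, sub_zero]
  module

lemma IsTransl.inv {α : Lr r} {m : ℤ} {g : G r} (hg : D.IsTransl α m g) :
    D.IsTransl α (-m) g⁻¹ := fun v => by
  have h : g (g⁻¹ v) = v := g.apply_symm_apply v
  rw [hg] at h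
  rw [eq_sub_of_add_eq h]
  push_cast
  module

lemma IsTransl.isCompatible {α : Lr r} {m : ℤ} {g : G r} (hg : D.IsTransl α m g) :
    D.IsCompatible g := by
  have happ (x : Lr r) : g (toV x) = toV (x + (m * D.p) • α) := by
    rw [hg, toV_add, toV_zsmul]
    push_cast
    rfl
  refine ⟨fun x => ⟨_, happ x⟩, fun γ hγ => ⟨γ, hγ, fun z c => ?_, fun x x' hx => ?_⟩⟩
  · rw [hg, hg]
    module
  · rw [happ, toV_injective.eq_iff] at hx
    subst hx
    rw [pairZ_add_left, pairZ_zsmul_left]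
    exact Int.modEq_iff_dvd.mpr ⟨-(m * pairZ α (D.coroot γ)), by ring⟩

lemma isCompatible_of_mem_Wp {g : G r} (hg : g ∈ D.Wp) : D.IsCompatible g := by
  induction hg using Subgroup.closure_induction'' with
  | mem g hg =>
    rcases hg with ⟨α, hα, hrefl⟩ | ⟨α, _, m, htr⟩
    · exact hrefl.isCompatible D (D.pos_sub hα)
    · exact htr.isCompatible D
  | inv_mem g hg =>
    rcases hg with ⟨α, hα, hrefl⟩ | ⟨α, _, m, htr⟩
    · rw [hrefl.inv_eq D (D.pos_sub hα)]
      exact hrefl.isCompatible D (D.pos_sub hα)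
    · exact (htr.inv D).isCompatible D
  | one => exact D.isCompatible_one
  | mul g h _ _ hg hh => exact hg.mul D hh

lemma exists_dot_mul_reflection {w t : G r} (hw : D.IsCompatible w) {α : Lr r} (hα : α ∈ D.Φ)
    {m : ℤ} (ht : D.IsRefl α m t) (lam : Lr r) :
    ∃ U : Lr r, D.dot w (toV lam) = toV U ∧ ∃ δ ∈ D.Φ, ∃ K : ℤ,
      D.dot (w * t) (toV lam) = toV (U - K • δ) ∧ K ≡ pairZ (U + D.ρ) (D.coroot δ) [ZMOD D.p] := by
  obtain ⟨x', hx'⟩ := hw.1 (lam + D.ρ)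
  obtain ⟨δ, hδ, hlin, hcong⟩ := hw.2 α hα
  set K := pairZ (lam + D.ρ) (D.coroot α) - m * D.p
  have ht' : t (toV (lam + D.ρ)) = toV (lam + D.ρ) + (-K : ℝ) • toV α := by
    rw [ht, pairR_toV]
    push_cast [K]
    module
  refine ⟨x' - D.ρ, ?_, δ, hδ, K, ?_, ?_⟩
  · rw [dot, ← toV_add, hx', toV_sub]
  · rw [dot, ← toV_add, AffineEquiv.mul_def, AffineEquiv.trans_apply, ht', hlin, hx']
    simp only [toV_sub, toV_zsmul]
    module
  · rw [sub_add_cancel]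
    exact ((hcong _ _ hx').trans (Int.modEq_iff_dvd.mpr ⟨-m, by simp only [K]; ring⟩)).symm

lemma exists_pos_smul_eq {δ : Lr r} (hδ : δ ∈ D.Φ) {K : ℤ} {x : Lr r}
    (hK : K ≡ pairZ x (D.coroot δ) [ZMOD D.p]) :
    ∃ β ∈ D.pos, ∃ K' : ℤ, K' • β = K • δ ∧ K' ≡ pairZ x (D.coroot β) [ZMOD D.p] := by
  rcases D.pos_or_neg δ hδ with hpos | hneg
  · exact ⟨δ, hpos, K, rfl, hK⟩
  · refine ⟨-δ, hneg, -K, neg_smul_neg K δ, ?_⟩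
    rw [D.coroot_neg hδ, pairZ_neg_right]
    exact hK.neg

lemma Le.refl (u : Vr r) : D.Le u u := ⟨0, by simp⟩

lemma Le.trans {u v w : Vr r} (huv : D.Le u v) (hvw : D.Le v w) : D.Le u w := by
  obtain ⟨c, hc⟩ := huv
  obtain ⟨c', hc'⟩ := hvw
  refine ⟨c + c', ?_⟩
  rw [← sub_add_sub_cancel w v u, hc, hc', ← Finset.sum_add_distrib]
  refine Finset.sum_congr rfl fun s _ => ?_
  simp only [Pi.add_apply, Nat.cast_add, add_smul, add_comm]

lemma le_sub_smul {β : Lr r} (hβ : β ∈ D.pos) (k : ℕ) (u : Vr r) :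
    D.Le (u - (k : ℝ) • toV β) u := by
  obtain ⟨e, he⟩ := D.pos_sum_simples β hβ
  refine ⟨fun s => k * e s, ?_⟩
  rw [sub_sub_cancel, he, toV_sum, Finset.smul_sum]
  refine Finset.sum_congr rfl fun s _ => ?_
  rw [toV_zsmul, smul_smul]
  push_cast
  rfl

lemma upStep_sub_smul (U : Lr r) {β : Lr r} (hβ : β ∈ D.pos) {k : ℤ} (hk : 0 ≤ k)
    (hcong : k ≡ pairZ (U + D.ρ) (D.coroot β) [ZMOD D.p]) :
    D.UpStep (toV (U - k • β)) (toV U) := by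
  obtain ⟨m, hm⟩ := Int.modEq_iff_dvd.mp hcong
  have hP : pairR (toV U + toV D.ρ) (D.coroot β) = pairZ (U + D.ρ) (D.coroot β) := by
    rw [← toV_add, pairR_toV]
  refine ⟨β, hβ, m, ?_, ?_⟩
  · rw [hP]
    exact_mod_cast (by linarith : m * (D.p : ℤ) ≤ pairZ (U + D.ρ) (D.coroot β))
  · have hk' : (pairZ (U + D.ρ) (D.coroot β) : ℝ) - m * D.p = k := by
      exact_mod_cast (by linarith : pairZ (U + D.ρ) (D.coroot β) - m * (D.p : ℤ) = k)
    rw [hP, hk', toV_sub, toV_zsmul]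

lemma UpStep.exists_eq_toV {v : Vr r} {U : Lr r} (h : D.UpStep v (toV U)) :
    ∃ β ∈ D.pos, ∃ k : ℕ, v = toV (U - (k : ℤ) • β) := by
  obtain ⟨β, hβ, m, hle, rfl⟩ := h
  have hP : pairR (toV U + toV D.ρ) (D.coroot β) = pairZ (U + D.ρ) (D.coroot β) := by
    rw [← toV_add, pairR_toV]
  rw [hP] at hle ⊢
  have hk : 0 ≤ pairZ (U + D.ρ) (D.coroot β) - m * D.p := by
    rw [sub_nonneg]; exact_mod_cast hle
  lift pairZ (U + D.ρ) (D.coroot β) - m * D.p to ℕ using hk with k hkdef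
  refine ⟨β, hβ, k, ?_⟩
  rw [toV_sub, toV_zsmul, hkdef]
  push_cast
  rfl

lemma le_of_up {v : Vr r} {U : Lr r} (h : D.Up v (toV U)) : D.Le v (toV U) := by
  suffices (∃ V : Lr r, v = toV V) ∧ D.Le v (toV U) from this.2
  induction h using Relation.ReflTransGen.head_induction_on with
  | refl => exact ⟨⟨U, rfl⟩, Le.refl D _⟩
  | head hstep _ ih =>
    obtain ⟨⟨V, rfl⟩, hle⟩ := ih
    obtain ⟨β, hβ, k, rfl⟩ := hstep.exists_eq_toV D
    refine ⟨⟨_, rfl⟩, Le.trans D ?_ hle⟩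
    rw [toV_sub, toV_zsmul, Int.cast_natCast]
    exact D.le_sub_smul hβ k (toV V)

lemma up_sub_smul_of_dvd (U : Lr r) {β : Lr r} (hβ : β ∈ D.pos) {k : ℤ} (hk : 0 ≤ k)
    (hdvd : (D.p : ℤ) ∣ k) : D.Up (toV (U - k • β)) (toV U) := by
  rcases hk.eq_or_lt with rfl | hk
  · rw [zero_smul, sub_zero]
    exact .refl
  set P := pairZ (U + D.ρ) (D.coroot β)
  set q := P % D.p
  have hp : (0 : ℤ) < D.p := by exact_mod_cast D.hp.pos
  have hq : q ≡ P [ZMOD D.p] := Int.mod_modEq P D.p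
  have hqk : q ≤ k := (Int.emod_lt_of_pos P hp).le.trans (Int.le_of_dvd hk hdvd)
  have hstep₁ : D.UpStep (toV (U - q • β)) (toV U) :=
    D.upStep_sub_smul U hβ (Int.emod_nonneg P hp.ne') hq
  -- after the first step `⟨_ + ρ, β∨⟩` has dropped by `2q`, and `k - q ≡ P - 2q`
  have hstep₂ : D.UpStep (toV (U - q • β - (k - q) • β)) (toV (U - q • β)) := by
    refine D.upStep_sub_smul _ hβ (sub_nonneg.mpr hqk) (Int.modEq_iff_dvd.mpr ?_)
    have hββ := D.root_coroot_two β (D.pos_sub hβ)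
    rw [show U - q • β + D.ρ = U + D.ρ - q • β by abel, pairZ_sub_left, pairZ_zsmul_left, hββ,
      show P - q * 2 - (k - q) = (P - q) - k by ring]
    exact dvd_sub (Int.modEq_iff_dvd.mp hq) hdvd
  rw [show U - k • β = U - q • β - (k - q) • β by module]
  exact .head hstep₂ (.single hstep₁)

lemma up_sub_sum_of_dvd {S : Finset (Lr r)} (hS : S ⊆ D.pos) (c : Lr r → ℤ)
    (hc : ∀ s ∈ S, 0 ≤ c s) (hcp : ∀ s ∈ S, (D.p : ℤ) ∣ c s) (U : Lr r) :
    D.Up (toV (U - ∑ s ∈ S, c s • s)) (toV U) := by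
  classical
  induction S using Finset.induction_on generalizing U with
  | empty =>
    rw [Finset.sum_empty, sub_zero]
    exact .refl
  | insert s S hs ih =>
    have hsS := Finset.mem_insert_self s S
    have hS' := (Finset.subset_insert s S).trans hS
    have hrest := ih hS' (fun x hx => hc x (Finset.mem_insert_of_mem hx))
      (fun x hx => hcp x (Finset.mem_insert_of_mem hx)) (U - c s • s)
    rw [Finset.sum_insert hs, ← sub_sub]
    exact hrest.trans (D.up_sub_smul_of_dvd U (hS hsS) (hc s hsS) (hcp s hsS))

lemma up_sub_smul_of_le (U : Lr r) {β : Lr r} (hβ : β ∈ D.pos) {K : ℤ}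
    (hK : K ≡ pairZ (U + D.ρ) (D.coroot β) [ZMOD D.p])
    (hle : D.Le (toV (U - K • β)) (toV U)) : D.Up (toV (U - K • β)) (toV U) := by
  rcases le_or_gt 0 K with hK₀ | hK₀
  · exact .single (D.upStep_sub_smul U hβ hK₀ hK)
  obtain ⟨c, hc⟩ := hle
  have hcone : K • β = ∑ s ∈ D.simples, (c s : ℤ) • s := toV_injective <| by
    rw [toV_sum, ← sub_sub_cancel (toV U) (toV (K • β)), ← toV_sub, hc]
    simp only [toV_zsmul, Int.cast_natCast]
  have hp : (1 : ℤ) ≤ D.p := by exact_mod_cast D.hp.one_lt.le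
  have hstep : D.UpStep (toV (U - (K - D.p * K) • β)) (toV U) :=
    D.upStep_sub_smul U hβ (by nlinarith) ((Int.modEq_iff_dvd.mpr ⟨K, by ring⟩).trans hK)
  have hchain := D.up_sub_sum_of_dvd (fun s hs => D.simples_sub hs) (fun s => D.p * c s)
    (fun s _ => by positivity) (fun s _ => dvd_mul_right _ _) (U - (K - D.p * K) • β)
  have hsum : ∑ s ∈ D.simples, ((D.p : ℤ) * c s) • s = (D.p * K) • β := by
    simp only [mul_smul, ← Finset.smul_sum, ← hcone]
  rw [hsum, show U - (K - D.p * K) • β - (D.p * K) • β = U - K • β by module] at hchain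
  exact hchain.trans (.single hstep)

lemma up_iff_le (U : Lr r) {β : Lr r} (hβ : β ∈ D.pos) {K : ℤ}
    (hK : K ≡ pairZ (U + D.ρ) (D.coroot β) [ZMOD D.p]) :
    D.Up (toV (U - K • β)) (toV U) ↔ D.Le (toV (U - K • β)) (toV U) :=
  ⟨D.le_of_up, D.up_sub_smul_of_le U hβ hK⟩

end ARDatum

theorem stmt15_general {r : ℕ} (D : ARDatum r)
    (lam : Lr r)
    (w : ARDatum.G r) (hw : w ∈ D.Wp)
    (t : ARDatum.G r) (htr : D.IsReflection t) :
    D.Lt (D.dot (w * t) (toV lam)) (D.dot w (toV lam)) ↔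
      D.Ups (D.dot (w * t) (toV lam)) (D.dot w (toV lam)) := by
  obtain ⟨α, hα, m, ht⟩ := htr
  obtain ⟨U, hu, δ, hδ, K, hv, hK⟩ :=
    D.exists_dot_mul_reflection (D.isCompatible_of_mem_Wp hw) (D.pos_sub hα) ht lam
  obtain ⟨β, hβ, K', hK'δ, hK'⟩ := D.exists_pos_smul_eq hδ hK
  rw [hu, hv, ← hK'δ]
  exact (D.up_iff_le U hβ hK').symm.and Iff.rfl

/-- For `λ ∈ X`, `w ∈ W_p` and any reflection `t ∈ W_p`:
`wt·λ < w·λ` (in `≤`) if and only if `wt·λ ≺ w·λ` (in `⪯`). -/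
theorem stmt15 {r : ℕ} (D : ARDatum r)
    (lam : Lr r)
    (w : ARDatum.G r) (hw : w ∈ D.Wp)
    (t : ARDatum.G r) (ht : t ∈ D.Wp) (htr : D.IsReflection t) :
    D.Lt (D.dot (w * t) (toV lam)) (D.dot w (toV lam)) ↔
      D.Ups (D.dot (w * t) (toV lam)) (D.dot w (toV lam)) :=
  stmt15_general D lam w hw t htr

end
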